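/- There exists a single martingale m that wins against every 'biased' sequence, i.e., against every ω : ℕ → Bool such that for all n, the number of indices i < n with ω i = false is at least the number of indices i < n with ω i = true. -/

import Mathlib

open Filter MeasureTheory Set
open scoped ENNReal

/-- The first `n` bits of `ω`, i.e. the list `[ω 0, …, ω (n-1)]`. -/
def prefixFn (ω : ℕ → Bool) (n : ℕ) : List Bool := List.ofFn fun i : Fin n => ω i

/-- `α` has limit frequency `p`: the fraction of `true`s among the first `N` terms
tends to `p` as `N → ∞`. -/
def LimitFreq (α : ℕ → Bool) (p : ℝ) : Prop :=
  Tendsto (fun N => (((Finset.range N).filter fun i => α i = true).card : ℝ) / N)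
    atTop (nhds p)

/-- The set of indices `i` such that the selection rule `s` selects the term `ω i`. -/
def SelectedIndices (s : List Bool → Bool) (ω : ℕ → Bool) : Set ℕ :=
  {i | s (prefixFn ω i) = true}

/-- The subsequence selected by `s` from `ω`: the selected terms, in increasing order of
index (meaningful when the selected index set is infinite). -/
noncomputable def SelectedSeq (s : List Bool → Bool) (ω : ℕ → Bool) : ℕ → Bool :=
  fun n => ω (Nat.nth (· ∈ SelectedIndices s ω) n)

/-- Requirement II for the selection rule `s` with limit `p`: the subsequence selected by
`s` is finite or has limit frequency `p`. -/
def SatisfiesII (s : List Bool → Bool) (ω : ℕ → Bool) (p : ℝ) : Prop :=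
  (SelectedIndices s ω).Finite ∨ LimitFreq (SelectedSeq s ω) p

/-- A (non-negative) martingale. -/
def IsMartingale (m : List Bool → ℝ) : Prop :=
  (∀ x, 0 ≤ m x) ∧ ∀ x, m x = (m (x ++ [false]) + m (x ++ [true])) / 2

/-- A (non-negative) supermartingale. -/
def IsSupermartingale (m : List Bool → ℝ) : Prop :=
  (∀ x, 0 ≤ m x) ∧ ∀ x, (m (x ++ [false]) + m (x ++ [true])) / 2 ≤ m x

/-- `m` wins against `ω`: the values of `m` on the prefixes of `ω` are unbounded. -/
def Wins (m : List Bool → ℝ) (ω : ℕ → Bool) : Prop :=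
  ∀ C : ℝ, ∃ n, C < m (prefixFn ω n)

/-- The cylinder of all infinite sequences extending the finite string `w`. -/
def cyl (w : List Bool) : Set (ℕ → Bool) := {ω | prefixFn ω w.length = w}

/-- `μ` is the uniform (fair-coin) measure on Cantor space, i.e. the infinite product
over `ℕ` of the uniform measure on `Bool`; it is characterized by its values on
cylinders: `μ (cyl w) = 2 ^ (- length w)`. -/
def IsUniformMeasure (μ : Measure (ℕ → Bool)) : Prop :=
  ∀ w : List Bool, μ (cyl w) = ((2 : ℝ≥0∞) ^ w.length)⁻¹

/-- `X` is an effectively null set: some computable `g` produces, for every `k`, a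
sequence of (optional) strings whose cylinders cover `X` and whose total measure is at
most `2^(-k)`. -/
def EffNull (X : Set (ℕ → Bool)) : Prop :=
  ∃ g : ℕ → ℕ → Option (List Bool), Computable₂ g ∧
    ∀ k : ℕ,
      (X ⊆ ⋃ n : ℕ, ⋃ w ∈ g k n, cyl w) ∧
      (∑' n : ℕ, ((g k n).elim 0 fun w => ((2 : ℝ≥0∞) ^ w.length)⁻¹)) ≤
        ((2 : ℝ≥0∞) ^ k)⁻¹

/-- `ω` is Martin-Löf random: it belongs to no effectively null set. -/
def MLRandom (ω : ℕ → Bool) : Prop := ∀ X : Set (ℕ → Bool), EffNull X → ω ∉ X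

/-- A canonical `Primcodable` structure on `ℚ`, via its canonical enumeration. -/
instance : Primcodable ℚ := Primcodable.ofEquiv ℕ (Denumerable.eqv ℚ)

/-- `f` is lower semicomputable: it is the pointwise supremum of a computable family of
rationals, nondecreasing in the second argument. -/
def LowerSemicomputableFn (f : List Bool → ℝ) : Prop :=
  ∃ g : List Bool → ℕ → ℚ, Computable₂ g ∧ (∀ x, Monotone fun n => g x n) ∧
    ∀ x, f x = ⨆ n, ((g x n : ℝ))

/-- `f` is computable: some computable family of rationals approximates it within
`2^(-n)`. -/
def ComputableFn (f : List Bool → ℝ) : Prop :=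
  ∃ g : List Bool → ℕ → ℚ, Computable₂ g ∧
    ∀ x n, |((g x n : ℝ)) - f x| ≤ (2 : ℝ) ^ (-(n : ℤ))
/-!
Under the fair-coin measure, a prefix of length `N` is biased with probability at most
`1 / (X + 1) + X * choose N (N / 2) / 2 ^ N` for every `X`: either the gambler's-ruin martingale
`#false + 1 - #true` (killed when the prefix stops being biased) ends above `X`, which by Markov
has probability at most `1 / (X + 1)`, or the number of `true`s lies in a window of `X` values,
each of binomial probability at most `choose N (N / 2) / 2 ^ N = O(N ^ (-1/2))`. So for every
`ε > 0` the conditional probability of being biased at a suitable time `N` is a martingale with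
initial capital at most `ε` that reaches `1` on every biased sequence, and summing `2 ^ k` copies
of these with capital `4⁻¹ ^ k` gives one martingale that wins against all of them.
-/

namespace IsMartingale

variable {m : List Bool → ℝ}

theorem le_two_mul (hm : IsMartingale m) (x : List Bool) (b : Bool) :
    m (x ++ [b]) ≤ 2 * m x := by
  have h := hm.2 x
  cases b <;> linarith [hm.1 (x ++ [false]), hm.1 (x ++ [true])]

theorem le_two_pow_length_mul (hm : IsMartingale m) (x : List Bool) :
    m x ≤ 2 ^ x.length * m [] := by
  induction x using List.reverseRecOn with
  | nil => simp
  | append_singleton x b ih =>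
    rw [List.length_append, List.length_singleton, pow_succ]
    linarith [hm.le_two_mul x b]

theorem const_mul (hm : IsMartingale m) {c : ℝ} (hc : 0 ≤ c) :
    IsMartingale fun x => c * m x :=
  ⟨fun x => mul_nonneg hc (hm.1 x), fun x => by simp only [hm.2 x]; ring⟩

theorem summable {m : ℕ → List Bool → ℝ} (hm : ∀ k, IsMartingale (m k))
    (hs : Summable fun k => m k []) (x : List Bool) : Summable fun k => m k x :=
  (hs.mul_left (2 ^ x.length)).of_nonneg_of_le (fun k => (hm k).1 x)
    fun k => (hm k).le_two_pow_length_mul x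

theorem tsum {m : ℕ → List Bool → ℝ} (hm : ∀ k, IsMartingale (m k))
    (hs : Summable fun k => m k []) : IsMartingale fun x => ∑' k, m k x := by
  have hsum := summable hm hs
  refine ⟨fun x => tsum_nonneg fun k => (hm k).1 x, fun x => ?_⟩
  rw [← (hsum _).tsum_add (hsum _), ← tsum_div_const]
  exact tsum_congr fun k => (hm k).2 x

end IsMartingale

/-- Ville's construction: sum `2 ^ k` copies of a martingale with initial capital at most
`4⁻¹ ^ k`. -/
theorem exists_martingale_wins_of_forall_pos (S : Set (ℕ → Bool))
    (h : ∀ ε > 0, ∃ m, IsMartingale m ∧ m [] ≤ ε ∧ ∀ ω ∈ S, ∃ n, 1 ≤ m (prefixFn ω n)) :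
    ∃ m, IsMartingale m ∧ ∀ ω ∈ S, Wins m ω := by
  choose m hm hm_nil hm_hit using fun k : ℕ => h ((4 : ℝ)⁻¹ ^ k) (by positivity)
  have hsc (k : ℕ) : IsMartingale fun x => 2 ^ k * m k x := (hm k).const_mul (by positivity)
  have hsum : Summable fun k => 2 ^ k * m k [] := by
    refine (summable_geometric_two).of_nonneg_of_le (fun k => (hsc k).1 []) fun k => ?_
    calc 2 ^ k * m k [] ≤ 2 ^ k * 4⁻¹ ^ k := by gcongr; exact hm_nil k
      _ = (1 / 2) ^ k := by rw [← mul_pow]; norm_num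
  refine ⟨_, IsMartingale.tsum hsc hsum, fun ω hω C => ?_⟩
  obtain ⟨k, hk⟩ := pow_unbounded_of_one_lt C one_lt_two
  obtain ⟨n, hn⟩ := hm_hit k ω hω
  refine ⟨n, hk.trans_le ?_⟩
  calc (2 : ℝ) ^ k ≤ 2 ^ k * m k (prefixFn ω n) := le_mul_of_one_le_right (by positivity) hn
    _ ≤ ∑' j, 2 ^ j * m j (prefixFn ω n) :=
      (IsMartingale.summable hsc hsum _).le_tsum k fun j _ => (hsc j).1 _

/-- `extAvg L f x` is the average of `f` over the `2 ^ L` extensions of `x` by `L` bits. -/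
noncomputable def extAvg : ℕ → (List Bool → ℝ) → List Bool → ℝ
  | 0, f, x => f x
  | L + 1, f, x => (extAvg L f (x ++ [false]) + extAvg L f (x ++ [true])) / 2

theorem extAvg_const (L : ℕ) (c : ℝ) (x : List Bool) : extAvg L (fun _ => c) x = c := by
  induction L generalizing x with
  | zero => rfl
  | succ L ih => simp only [extAvg, ih]; ring

theorem extAvg_add (L : ℕ) (f g : List Bool → ℝ) (x : List Bool) :
    extAvg L (fun y => f y + g y) x = extAvg L f x + extAvg L g x := by
  induction L generalizing x with
  | zero => rfl
  | succ L ih => simp only [extAvg, ih]; ring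

theorem extAvg_div_const (L : ℕ) (f : List Bool → ℝ) (c : ℝ) (x : List Bool) :
    extAvg L (fun y => f y / c) x = extAvg L f x / c := by
  induction L generalizing x with
  | zero => rfl
  | succ L ih => simp only [extAvg, ih]; ring

theorem extAvg_sum {ι : Type*} (s : Finset ι) (L : ℕ) (f : ι → List Bool → ℝ) (x : List Bool) :
    extAvg L (fun y => ∑ i ∈ s, f i y) x = ∑ i ∈ s, extAvg L (f i) x := by
  classical
  induction s using Finset.induction_on with
  | empty => simpa using extAvg_const L 0 x
  | insert i s hi ih => simp only [Finset.sum_insert hi, extAvg_add, ih]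

theorem extAvg_le_extAvg {L : ℕ} {f g : List Bool → ℝ} {x : List Bool}
    (h : ∀ z : List Bool, z.length = L → f (x ++ z) ≤ g (x ++ z)) :
    extAvg L f x ≤ extAvg L g x := by
  induction L generalizing x with
  | zero => simpa [extAvg] using h [] rfl
  | succ L ih =>
    have step (b : Bool) : extAvg L f (x ++ [b]) ≤ extAvg L g (x ++ [b]) :=
      ih fun z hz => by simpa using h (b :: z) (by simp [hz])
    simp only [extAvg]
    linarith [step false, step true]

theorem extAvg_congr {L : ℕ} {f g : List Bool → ℝ} {x : List Bool}
    (h : ∀ z : List Bool, z.length = L → f (x ++ z) = g (x ++ z)) :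
    extAvg L f x = extAvg L g x :=
  (extAvg_le_extAvg fun z hz => (h z hz).le).antisymm (extAvg_le_extAvg fun z hz => (h z hz).ge)

theorem IsMartingale.extAvg_eq {m : List Bool → ℝ} (hm : IsMartingale m) (L : ℕ)
    (x : List Bool) :
    extAvg L m x = m x := by
  induction L generalizing x with
  | zero => rfl
  | succ L ih => simp only [extAvg, ih, ← hm.2]

/-- The probability that a random extension of `x` lies in `A` once cut to length `N`. -/
noncomputable def hitProb (A : List Bool → Prop) [DecidablePred A] (N : ℕ) (x : List Bool) : ℝ :=
  extAvg (N - x.length) (fun y => if A (y.take N) then 1 else 0) x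

theorem isMartingale_hitProb (A : List Bool → Prop) [DecidablePred A] (N : ℕ) :
    IsMartingale (hitProb A N) := by
  refine ⟨fun x => ?_, fun x => ?_⟩
  · exact (extAvg_const _ 0 x).symm.trans_le
      (extAvg_le_extAvg fun z _ => by split_ifs <;> norm_num)
  · rcases lt_or_ge x.length N with hx | hx
    · obtain ⟨L, hL⟩ : ∃ L, N - x.length = L + 1 := ⟨N - x.length - 1, by omega⟩
      have hlen (b : Bool) : N - (x ++ [b]).length = L := by simp; omega
      simp only [hitProb, hlen, hL, extAvg]
    · have hlen (b : Bool) : N - (x ++ [b]).length = 0 := by simp; omega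
      simp only [hitProb, hlen, Nat.sub_eq_zero_of_le hx, extAvg,
        List.take_append_of_le_length hx]
      ring

theorem hitProb_of_length_eq {A : List Bool → Prop} [DecidablePred A] {N : ℕ} {x : List Bool}
    (hx : x.length = N) (hA : A x) : hitProb A N x = 1 := by
  subst hx
  simp [hitProb, extAvg, hA]

theorem hitProb_nil (A : List Bool → Prop) [DecidablePred A] (N : ℕ) :
    hitProb A N [] = extAvg N (fun y => if A y then 1 else 0) [] := by
  refine extAvg_congr fun z hz => ?_
  simp [← show z.length = N by simpa using hz]

def IsBiased (x : List Bool) : Prop := ∀ y ∈ x.inits, y.count true ≤ y.count false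

instance : DecidablePred IsBiased := fun x =>
  inferInstanceAs (Decidable (∀ y ∈ x.inits, y.count true ≤ y.count false))

theorem isBiased_nil : IsBiased [] := by simp [IsBiased]

theorem isBiased_append_singleton {x : List Bool} {b : Bool} :
    IsBiased (x ++ [b]) ↔ IsBiased x ∧ (x ++ [b]).count true ≤ (x ++ [b]).count false := by
  simp [IsBiased, List.inits_append, or_imp, forall_and]

theorem IsBiased.count_le {x : List Bool} (hx : IsBiased x) : x.count true ≤ x.count false :=
  hx x ((List.mem_inits x x).2 List.prefix_rfl)

theorem prefixFn_succ (ω : ℕ → Bool) (n : ℕ) : prefixFn ω (n + 1) = prefixFn ω n ++ [ω n] := by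
  rw [prefixFn, prefixFn, List.ofFn_succ']
  simp

theorem count_prefixFn (ω : ℕ → Bool) (n : ℕ) (b : Bool) :
    (prefixFn ω n).count b = ((Finset.range n).filter fun i => ω i = b).card := by
  induction n with
  | zero => rfl
  | succ n ih =>
    rw [prefixFn_succ, List.count_append, ih, Finset.range_add_one, Finset.filter_insert]
    by_cases h : ω n = b <;> simp [h]

theorem isBiased_prefixFn {ω : ℕ → Bool}
    (hω : ∀ n : ℕ, ((Finset.range n).filter fun i => ω i = true).card ≤
      ((Finset.range n).filter fun i => ω i = false).card) (N : ℕ) :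
    IsBiased (prefixFn ω N) := by
  induction N with
  | zero => exact isBiased_nil
  | succ N ih =>
    rw [prefixFn_succ, isBiased_append_singleton, ← prefixFn_succ, count_prefixFn, count_prefixFn]
    exact ⟨ih, hω _⟩

/-- The capital of a gambler who starts with `1` and stakes `1` on `false` at every round; it
hits `0` exactly when the prefix stops being biased. -/
noncomputable def ruinCapital (x : List Bool) : ℝ :=
  if IsBiased x then (x.count false : ℝ) + 1 - x.count true else 0

theorem isMartingale_ruinCapital : IsMartingale ruinCapital := by
  refine ⟨fun x => ?_, fun x => ?_⟩
  · unfold ruinCapital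
    split_ifs with hx
    · have : (x.count true : ℝ) ≤ x.count false := by exact_mod_cast hx.count_le
      linarith
    · exact le_rfl
  · by_cases hx : IsBiased x
    · have hle := hx.count_le
      have hfalse : IsBiased (x ++ [false]) := isBiased_append_singleton.2 ⟨hx, by simp; omega⟩
      by_cases htrue : IsBiased (x ++ [true])
      · simp [ruinCapital, hx, hfalse, htrue]
        ring
      · have heq : x.count true = x.count false := by
          by_contra hne
          exact htrue (isBiased_append_singleton.2 ⟨hx, by simp; omega⟩)
        simp [ruinCapital, hx, hfalse, htrue, heq]
        ring
    · simp [ruinCapital, hx, isBiased_append_singleton]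

theorem extAvg_count_true_eq_zero (L t : ℕ) {x : List Bool} (hx : t < x.count true) :
    extAvg L (fun y => if y.count true = t then 1 else 0) x = 0 := by
  refine (extAvg_congr fun z _ => ?_).trans (extAvg_const L 0 x)
  rw [if_neg (by rw [List.count_append]; omega)]

theorem extAvg_count_true_eq (L : ℕ) {t j : ℕ} {x : List Bool} (hj : x.count true + j = t) :
    extAvg L (fun y => if y.count true = t then 1 else 0) x = L.choose j / 2 ^ L := by
  induction L generalizing x j with
  | zero => cases j <;> simp [extAvg] <;> omega
  | succ L ih =>
    have hf := ih (x := x ++ [false]) (j := j) (by simpa using hj)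
    simp only [extAvg, hf]
    cases j with
    | zero =>
      rw [extAvg_count_true_eq_zero L t (by simp; omega)]
      simp [pow_succ]
      ring
    | succ j =>
      rw [ih (x := x ++ [true]) (j := j) (by simp; omega), Nat.choose_succ_succ']
      push_cast
      ring

theorem extAvg_count_true_le (N t : ℕ) :
    extAvg N (fun y => if y.count true = t then 1 else 0) [] ≤ N.choose (N / 2) / 2 ^ N := by
  rw [extAvg_count_true_eq N (j := t) (by simp)]
  gcongr
  exact_mod_cast Nat.choose_le_middle t N

theorem isBiased_indicator_le (X : ℕ) (y : List Bool) :
    (if IsBiased y then 1 else 0 : ℝ) ≤ ruinCapital y / (X + 1) +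
      ∑ t ∈ Finset.Ico (y.length / 2 + 1 - X) (y.length / 2 + 1),
        if y.count true = t then 1 else 0 := by
  have hsum : 0 ≤ ∑ t ∈ Finset.Ico (y.length / 2 + 1 - X) (y.length / 2 + 1),
      (if y.count true = t then 1 else 0 : ℝ) :=
    Finset.sum_nonneg fun t _ => by split_ifs <;> norm_num
  have hruin : 0 ≤ ruinCapital y / (X + 1) :=
    div_nonneg (isMartingale_ruinCapital.1 y) (by positivity)
  by_cases hy : IsBiased y
  · rw [if_pos hy]
    have hlen := List.count_true_add_count_false y
    have hle := hy.count_le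
    rcases le_or_gt (y.count true + X) (y.count false) with hX | hX
    · have : (X : ℝ) + 1 ≤ ruinCapital y := by
        rw [ruinCapital, if_pos hy]
        have : (y.count true : ℝ) + X ≤ y.count false := by exact_mod_cast hX
        linarith
      have : 1 ≤ ruinCapital y / (X + 1) := by rw [le_div_iff₀ (by positivity)]; linarith
      linarith
    · have hmem : y.count true ∈ Finset.Ico (y.length / 2 + 1 - X) (y.length / 2 + 1) := by
        rw [Finset.mem_Ico]; omega
      have := Finset.single_le_sum (f := fun t => if y.count true = t then (1 : ℝ) else 0)
        (fun t _ => by split_ifs <;> norm_num) hmem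
      simp only [if_true] at this
      linarith
  · rw [if_neg hy]
    linarith

theorem extAvg_isBiased_le (N X : ℕ) :
    extAvg N (fun y => if IsBiased y then 1 else 0) [] ≤
      1 / (X + 1) + X * (N.choose (N / 2) / 2 ^ N) := by
  calc extAvg N (fun y => if IsBiased y then 1 else 0) []
      ≤ extAvg N (fun y => ruinCapital y / (X + 1) +
          ∑ t ∈ Finset.Ico (N / 2 + 1 - X) (N / 2 + 1), if y.count true = t then 1 else 0) [] :=
        extAvg_le_extAvg fun z hz => by simpa [hz] using isBiased_indicator_le X z
    _ = 1 / (X + 1) + ∑ t ∈ Finset.Ico (N / 2 + 1 - X) (N / 2 + 1),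
          extAvg N (fun y => if y.count true = t then 1 else 0) [] := by
        rw [extAvg_add, extAvg_div_const, isMartingale_ruinCapital.extAvg_eq, extAvg_sum]
        simp [ruinCapital, isBiased_nil]
    _ ≤ 1 / (X + 1) + X * (N.choose (N / 2) / 2 ^ N) := by
        gcongr
        refine (Finset.sum_le_card_nsmul _ _ _ fun t _ => extAvg_count_true_le N t).trans ?_
        rw [nsmul_eq_mul, Nat.card_Ico]
        gcongr
        exact_mod_cast (by omega : N / 2 + 1 - (N / 2 + 1 - X) ≤ X)

theorem two_mul_add_one_mul_centralBinom_sq_le (n : ℕ) :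
    (2 * n + 1) * n.centralBinom ^ 2 ≤ 16 ^ n := by
  induction n with
  | zero => simp
  | succ n ih =>
    refine Nat.le_of_mul_le_mul_left ?_ (by positivity : 0 < (n + 1) ^ 2)
    calc (n + 1) ^ 2 * ((2 * (n + 1) + 1) * (n + 1).centralBinom ^ 2)
        = (2 * n + 3) * ((n + 1) * (n + 1).centralBinom) ^ 2 := by ring
      _ = 4 * (2 * n + 1) * (2 * n + 3) * ((2 * n + 1) * n.centralBinom ^ 2) := by
        rw [Nat.succ_mul_centralBinom_succ]; ring
      _ ≤ 4 * (2 * n + 1) * (2 * n + 3) * 16 ^ n := by gcongr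
      _ ≤ (n + 1) ^ 2 * 16 * 16 ^ n := Nat.mul_le_mul_right _ (by nlinarith)
      _ = (n + 1) ^ 2 * 16 ^ (n + 1) := by ring

theorem exists_choose_half_div_two_pow_le {δ : ℝ} (hδ : 0 < δ) :
    ∃ N : ℕ, (N.choose (N / 2) : ℝ) / 2 ^ N ≤ δ := by
  obtain ⟨n, hn⟩ := exists_nat_gt (1 / δ ^ 2)
  refine ⟨2 * n, ?_⟩
  have hq : ((2 * n).choose (2 * n / 2) : ℝ) / 2 ^ (2 * n) = n.centralBinom / 4 ^ n := by
    rw [Nat.mul_div_cancel_left n two_pos, ← Nat.centralBinom_eq_two_mul_choose, pow_mul]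
    norm_num
  rw [hq]
  have hsq : (2 * n + 1 : ℝ) * (n.centralBinom / 4 ^ n) ^ 2 ≤ 1 := by
    rw [div_pow, ← pow_mul, mul_comm n, pow_mul, mul_div_assoc', div_le_one (by positivity)]
    norm_num
    exact_mod_cast two_mul_add_one_mul_centralBinom_sq_le n
  have : (n.centralBinom / 4 ^ n : ℝ) ^ 2 ≤ δ ^ 2 := by
    rw [div_lt_iff₀ (by positivity)] at hn
    nlinarith [sq_nonneg (n.centralBinom / 4 ^ n : ℝ)]
  exact (pow_le_pow_iff_left₀ (by positivity) hδ.le two_ne_zero).1 this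

theorem exists_extAvg_isBiased_le {ε : ℝ} (hε : 0 < ε) :
    ∃ N, extAvg N (fun y => if IsBiased y then 1 else 0) [] ≤ ε := by
  obtain ⟨X, hX⟩ := exists_nat_gt (2 / ε)
  obtain ⟨N, hN⟩ := exists_choose_half_div_two_pow_le (δ := ε / (2 * (X + 1))) (by positivity)
  refine ⟨N, (extAvg_isBiased_le N X).trans ?_⟩
  have hX' : 1 / ((X : ℝ) + 1) ≤ ε / 2 := by
    rw [div_le_div_iff₀ (by positivity) two_pos]
    rw [div_lt_iff₀ hε] at hX
    linarith
  have hXN : (X : ℝ) * (N.choose (N / 2) / 2 ^ N) ≤ ε / 2 :=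
    calc (X : ℝ) * (N.choose (N / 2) / 2 ^ N) ≤ (X + 1) * (ε / (2 * (X + 1))) := by
          gcongr
          linarith
      _ = ε / 2 := by field_simp
  linarith

/-- There is a single martingale winning against every biased sequence, i.e. every
sequence each of whose prefixes has at least as many `false`s (zeros) as `true`s
(ones). -/
theorem martingale_against_biased :
    ∃ m : List Bool → ℝ, IsMartingale m ∧
      ∀ ω : ℕ → Bool,
        (∀ n : ℕ, ((Finset.range n).filter fun i => ω i = true).card ≤
          ((Finset.range n).filter fun i => ω i = false).card) →
        Wins m ω := by
  obtain ⟨m, hm, hwins⟩ := exists_martingale_wins_of_forall_pos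
    {ω | ∀ n : ℕ, ((Finset.range n).filter fun i => ω i = true).card ≤
      ((Finset.range n).filter fun i => ω i = false).card} fun ε hε => by
    obtain ⟨N, hN⟩ := exists_extAvg_isBiased_le hε
    refine ⟨hitProb IsBiased N, isMartingale_hitProb IsBiased N,
      (hitProb_nil IsBiased N).trans_le hN, fun ω hω => ⟨N, ?_⟩⟩
    exact (hitProb_of_length_eq List.length_ofFn (isBiased_prefixFn hω N)).ge
  exact ⟨m, hm, fun ω hω => hwins ω hω⟩
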